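/- The presented group on generators α, t with relations α⁴ = 1, [t, αtα⁻¹] = 1 and [t, α²tα⁻²] = 1 is isomorphic to the semidirect product ℤ⁴ ⋊ ℤ/4ℤ, via an isomorphism sending t to the first standard basis vector of ℤ⁴ and α to the generator 1 of ℤ/4ℤ. (This is the two-generator form of the presentation of the cell stabilizer B_{σ⁻} in the universal mapping class group of genus zero.) -/

import Mathlib

/-!
Write `tᵢ = αⁱ t α⁻ⁱ` for `i ∈ ℤ/4ℤ`; conjugation by `α` permutes the `tᵢ` cyclically. The
relations say that `t₀` commutes with `t₁` and `t₂`, and conjugating `[t₁, t₀] = 1` by `α³` gives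
`[t₀, t₃] = 1`, so all the `tᵢ` commute. Hence `eᵢ ↦ tᵢ`, `1 ↦ α` defines a homomorphism
`ℤ⁴ ⋊ ℤ/4ℤ → ⟨α, t⟩`, and it is inverse to `α ↦ 1`, `t ↦ e₀` because both composites fix
generators.
-/

namespace Stmt8

/-- The additive automorphism of `ℤ⁴` (basis indexed by `ZMod 4`) cyclically shifting the
standard basis, sending `eᵢ` to `e_{i+1}`. -/
def shiftAdd : (ZMod 4 → ℤ) ≃+ (ZMod 4 → ℤ) where
  toFun f := fun j => f (j - 1)
  invFun f := fun j => f (j + 1)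
  left_inv f := funext fun j => by show f (j + 1 - 1) = f j; rw [add_sub_cancel_right]
  right_inv f := funext fun j => by show f (j - 1 + 1) = f j; rw [sub_add_cancel]
  map_add' f g := rfl

/-- The same automorphism, viewed multiplicatively. -/
def mshift : MulAut (Multiplicative (ZMod 4 → ℤ)) := AddEquiv.toMultiplicative shiftAdd

lemma mshift_pow_four : mshift ^ 4 = 1 := by
  have h : ∀ x, mshift (mshift (mshift (mshift x))) = x := by
    intro x
    show Multiplicative.ofAdd (fun j => Multiplicative.toAdd x (j - 1 - 1 - 1 - 1)) = x
    have : ∀ j : ZMod 4, j - 1 - 1 - 1 - 1 = j := by decide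
    simp only [this]
    rfl
  refine MulEquiv.ext fun x => ?_
  rw [pow_succ, pow_succ, pow_succ, pow_one]
  simpa using h x

/-- The action of `ℤ/4ℤ` on `ℤ⁴` in which the generator `1` cyclically shifts the basis,
sending `eᵢ` to `e_{i+1}`. -/
def act4 : Multiplicative (ZMod 4) →* MulAut (Multiplicative (ZMod 4 → ℤ)) :=
  AddMonoidHom.toMultiplicativeLeft
    (ZMod.lift 4 ⟨zmultiplesHom _ (Additive.ofMul mshift), by
      show (((4 : ℕ) : ℤ)) • Additive.ofMul mshift = 0
      have h : (((4:ℕ):ℤ)) • Additive.ofMul mshift = Additive.ofMul (mshift ^ (((4:ℕ):ℤ))) :=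
        (ofMul_zpow _ _).symm
      rw [h, zpow_natCast, mshift_pow_four]
      rfl⟩)

/-- The generator `α`. -/
def a : FreeGroup (Fin 2) := FreeGroup.of 0

/-- The generator `t`. -/
def t : FreeGroup (Fin 2) := FreeGroup.of 1

open scoped commutatorElement

/-- Relators: `α⁴ = 1`, `[t, αtα⁻¹] = 1`, `[t, α²tα⁻²] = 1`. -/
def rels : Set (FreeGroup (Fin 2)) :=
  {a ^ 4, ⁅t, a * t * a⁻¹⁆, ⁅t, a ^ 2 * t * (a ^ 2)⁻¹⁆}

end Stmt8

open Multiplicative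

section ZModHom

variable {n : ℕ}

theorem map_ofAdd_natCast {M : Type*} [Monoid M] (f : Multiplicative (ZMod n) →* M) (k : ℕ) :
    f (ofAdd (k : ZMod n)) = f (ofAdd 1) ^ k := by
  rw [← nsmul_one, ofAdd_nsmul, map_pow]

theorem MonoidHom.ext_mzmod [NeZero n] {M : Type*} [Monoid M]
    {f g : Multiplicative (ZMod n) →* M} (h : f (ofAdd 1) = g (ofAdd 1)) : f = g := by
  refine MonoidHom.ext fun x => ?_
  obtain ⟨k, hk⟩ := ZMod.natCast_zmod_surjective (toAdd x)
  rw [← ofAdd_toAdd x, ← hk, map_ofAdd_natCast, map_ofAdd_natCast, h]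

variable {G : Type*} [Group G]

def zmodPowersHom (a : G) (ha : a ^ n = 1) : Multiplicative (ZMod n) →* G :=
  AddMonoidHom.toMultiplicativeLeft
    (ZMod.lift n ⟨zmultiplesHom _ (Additive.ofMul a), by
      show (n : ℤ) • Additive.ofMul a = 0
      rw [natCast_zsmul, ← ofMul_pow, ha, ofMul_one]⟩)

theorem zmodPowersHom_ofAdd_one (a : G) (ha : a ^ n = 1) :
    zmodPowersHom a ha (ofAdd 1) = a := by
  simp only [zmodPowersHom, AddMonoidHom.coe_toMultiplicativeLeft, Function.comp_apply,
    toAdd_ofAdd]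
  rw [← Int.cast_one, ZMod.lift_coe]
  simp

end ZModHom

section CommutingZPowers

variable {ι M : Type*} [Fintype ι] [DecidableEq ι]

theorem MonoidHom.ext_ofAdd_single [Group M] {f g : Multiplicative (ι → ℤ) →* M}
    (h : ∀ i, f (ofAdd (Pi.single i 1)) = g (ofAdd (Pi.single i 1))) : f = g := by
  let e := (MulEquiv.funMultiplicative ι ℤ).symm.toMonoidHom
  suffices f.comp e = g.comp e from
    MonoidHom.ext fun x => DFunLike.congr_fun this (MulEquiv.funMultiplicative ι ℤ x)
  refine MonoidHom.pi_ext fun i x => ?_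
  have hi : (f.comp e).comp (MonoidHom.mulSingle _ i) = (g.comp e).comp (MonoidHom.mulSingle _ i) :=
    MonoidHom.ext_mint (h i)
  exact DFunLike.congr_fun hi x

variable [Group M]

def zpowersPiHom (f : ι → M) (hf : Pairwise fun i j => Commute (f i) (f j)) :
    Multiplicative (ι → ℤ) →* M :=
  (MonoidHom.noncommPiCoprod (fun i => zpowersHom M (f i))
      fun _ _ hij _ _ => (hf hij).zpow_zpow _ _).comp
    (MulEquiv.funMultiplicative ι ℤ).toMonoidHom

theorem zpowersPiHom_single (f : ι → M) (hf : Pairwise fun i j => Commute (f i) (f j)) (i : ι) :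
    zpowersPiHom f hf (ofAdd (Pi.single i 1)) = f i := by
  have : MulEquiv.funMultiplicative ι ℤ (ofAdd (Pi.single i 1)) = Pi.mulSingle i (ofAdd 1) := rfl
  rw [zpowersPiHom, MonoidHom.comp_apply, MulEquiv.coe_toMonoidHom, this]
  exact (MonoidHom.noncommPiCoprod_mulSingle (fun i => zpowersHom M (f i)) i (ofAdd 1)).trans
    (zpow_one (f i))

end CommutingZPowers

theorem SemidirectProduct.commute_inl_conj_inl {N G : Type*} [CommGroup N] [Group G]
    {φ : G →* MulAut N} (n m : N) (g : G) :
    Commute (inl n : N ⋊[φ] G) (inr g * inl m * (inr g)⁻¹) := by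
  rw [← map_inv, ← inl_aut]
  exact (Commute.all n _).map inl

section ConjOrbit

variable {G : Type*} [Group G] {n : ℕ} (a : Multiplicative (ZMod n) →* G) (x : G)

def conjOrbit (i : ZMod n) : G := MulAut.conj (a (ofAdd i)) x

theorem conjOrbit_zero : conjOrbit a x 0 = x := by
  simp [conjOrbit]

theorem conj_conjOrbit (k i : ZMod n) :
    MulAut.conj (a (ofAdd k)) (conjOrbit a x i) = conjOrbit a x (k + i) := by
  simp [conjOrbit, ofAdd_add, mul_assoc]

variable {a x}

theorem Commute.conjOrbit_add {i j : ZMod n} (h : Commute (conjOrbit a x i) (conjOrbit a x j))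
    (k : ZMod n) : Commute (conjOrbit a x (k + i)) (conjOrbit a x (k + j)) := by
  simpa only [conj_conjOrbit] using h.map (MulAut.conj (a (ofAdd k)))

theorem conjOrbit_commute {a : Multiplicative (ZMod 4) →* G}
    (h₁ : Commute x (conjOrbit a x 1)) (h₂ : Commute x (conjOrbit a x 2)) (i j : ZMod 4) :
    Commute (conjOrbit a x i) (conjOrbit a x j) := by
  have h₀ : ∀ d, Commute (conjOrbit a x 0) (conjOrbit a x d) := by
    rw [conjOrbit_zero]
    have h₃ : Commute x (conjOrbit a x 3) := by
      have h : Commute (conjOrbit a x 1) (conjOrbit a x 0) := by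
        rw [conjOrbit_zero]; exact h₁.symm
      simpa [conjOrbit_zero, show (3 : ZMod 4) + 1 = 0 by decide] using h.conjOrbit_add 3
    intro d
    rcases (by decide : ∀ d : ZMod 4, d = 0 ∨ d = 1 ∨ d = 2 ∨ d = 3) d with rfl | rfl | rfl | rfl
    · rw [conjOrbit_zero]
    · exact h₁
    · exact h₂
    · exact h₃
  simpa using (h₀ (j - i)).conjOrbit_add i

end ConjOrbit

namespace Stmt8

open scoped commutatorElement
open SemidirectProduct

local notation "Γ" => Multiplicative (ZMod 4 → ℤ) ⋊[act4] Multiplicative (ZMod 4)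

theorem act4_ofAdd_one : act4 (ofAdd 1) = mshift := by
  simp only [act4, AddMonoidHom.coe_toMultiplicativeLeft, Function.comp_apply, toAdd_ofAdd]
  rw [← Int.cast_one, ZMod.lift_coe]
  simp

theorem mshift_pow_ofAdd (k : ℕ) (f : ZMod 4 → ℤ) :
    (mshift ^ k) (ofAdd f) = ofAdd fun j => f (j - k) := by
  induction k with
  | zero => simp
  | succ k ih =>
    rw [pow_succ', MulAut.mul_apply, ih]
    simp [mshift, shiftAdd, sub_sub, add_comm]

theorem act4_ofAdd_single (i j : ZMod 4) (m : ℤ) :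
    act4 (ofAdd i) (ofAdd (Pi.single j m)) = ofAdd (Pi.single (i + j) m) := by
  obtain ⟨k, rfl⟩ := ZMod.natCast_zmod_surjective i
  rw [map_ofAdd_natCast, act4_ofAdd_one, mshift_pow_ofAdd]
  congr 1
  funext l
  simp only [Pi.single_apply, sub_eq_iff_eq_add, add_comm]

def A : PresentedGroup rels := PresentedGroup.mk rels a

def T : PresentedGroup rels := PresentedGroup.mk rels t

theorem A_pow_four : A ^ 4 = 1 := by
  have h := PresentedGroup.one_of_mem (show a ^ 4 ∈ rels by simp [rels])
  rwa [map_pow] at h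

theorem commute_T_conj_A : Commute T (A * T * A⁻¹) := by
  have h := PresentedGroup.one_of_mem (show ⁅t, a * t * a⁻¹⁆ ∈ rels by simp [rels])
  rw [map_commutatorElement, map_mul, map_mul, map_inv] at h
  exact commutatorElement_eq_one_iff_commute.mp h

theorem commute_T_conj_A_sq : Commute T (A ^ 2 * T * (A ^ 2)⁻¹) := by
  have h := PresentedGroup.one_of_mem (show ⁅t, a ^ 2 * t * (a ^ 2)⁻¹⁆ ∈ rels by simp [rels])
  rw [map_commutatorElement, map_mul, map_mul, map_inv, map_pow] at h
  exact commutatorElement_eq_one_iff_commute.mp h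

def powA : Multiplicative (ZMod 4) →* PresentedGroup rels := zmodPowersHom A A_pow_four

theorem powA_ofAdd_one : powA (ofAdd 1) = A := zmodPowersHom_ofAdd_one _ _

theorem commute_conjOrbit_T (i j : ZMod 4) :
    Commute (conjOrbit powA T i) (conjOrbit powA T j) := by
  refine conjOrbit_commute ?_ ?_ i j
  · rw [conjOrbit, powA_ofAdd_one, MulAut.conj_apply]
    exact commute_T_conj_A
  · have h : powA (ofAdd 2) = A ^ 2 := by
      simpa only [Nat.cast_ofNat, powA_ofAdd_one] using map_ofAdd_natCast powA 2
    rw [conjOrbit, h, MulAut.conj_apply]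
    exact commute_T_conj_A_sq

def conjOrbitHom : Multiplicative (ZMod 4 → ℤ) →* PresentedGroup rels :=
  zpowersPiHom (conjOrbit powA T) fun i j _ => commute_conjOrbit_T i j

theorem conjOrbitHom_single (i : ZMod 4) :
    conjOrbitHom (ofAdd (Pi.single i 1)) = conjOrbit powA T i :=
  zpowersPiHom_single _ _ i

theorem conjOrbitHom_comp_act4 (i : ZMod 4) :
    conjOrbitHom.comp (act4 (ofAdd i)).toMonoidHom =
      (MulAut.conj (powA (ofAdd i))).toMonoidHom.comp conjOrbitHom := by
  refine MonoidHom.ext_ofAdd_single fun j => ?_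
  simp only [MonoidHom.comp_apply, MulEquiv.coe_toMonoidHom, act4_ofAdd_single,
    conjOrbitHom_single, conj_conjOrbit]

def toPresented : Γ →* PresentedGroup rels :=
  SemidirectProduct.lift conjOrbitHom powA fun g => conjOrbitHom_comp_act4 (toAdd g)

def generatorImage : Fin 2 → Γ := ![inr (ofAdd 1), inl (ofAdd (Pi.single 0 1))]

theorem lift_generatorImage_of_mem_rels : ∀ r ∈ rels, FreeGroup.lift generatorImage r = 1 := by
  have ha : FreeGroup.lift generatorImage a = inr (ofAdd 1) := by simp [a, generatorImage]
  have ht : FreeGroup.lift generatorImage t = inl (ofAdd (Pi.single 0 1)) := by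
    simp [t, generatorImage]
  simp only [rels, Set.mem_insert_iff, Set.mem_singleton_iff, forall_eq_or_imp, forall_eq,
    map_pow, map_commutatorElement, map_mul, map_inv, ha, ht, commutatorElement_eq_one_iff_commute]
  refine ⟨?_, commute_inl_conj_inl _ _ _, commute_inl_conj_inl _ _ _⟩
  rw [← map_pow, ← ofAdd_nsmul]
  rfl

def ofPresented : PresentedGroup rels →* Γ :=
  PresentedGroup.toGroup lift_generatorImage_of_mem_rels

theorem ofPresented_A : ofPresented A = inr (ofAdd 1) :=
  PresentedGroup.toGroup.of _

theorem ofPresented_T : ofPresented T = inl (ofAdd (Pi.single 0 1)) :=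
  PresentedGroup.toGroup.of _

theorem ofPresented_powA (g : Multiplicative (ZMod 4)) : ofPresented (powA g) = inr g := by
  have h : ofPresented.comp powA = inr := MonoidHom.ext_mzmod (by
    rw [MonoidHom.comp_apply, powA_ofAdd_one, ofPresented_A])
  exact DFunLike.congr_fun h g

theorem ofPresented_conjOrbit (i : ZMod 4) :
    ofPresented (conjOrbit powA T i) = inl (ofAdd (Pi.single i 1)) := by
  rw [conjOrbit, MulAut.conj_apply, map_mul, map_mul, map_inv, ofPresented_powA, ofPresented_T,
    ← map_inv, ← inl_aut, act4_ofAdd_single, add_zero]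

theorem toPresented_comp_ofPresented : toPresented.comp ofPresented = MonoidHom.id _ := by
  refine PresentedGroup.ext (Fin.forall_fin_two.mpr ⟨?_, ?_⟩)
  · show toPresented (ofPresented A) = A
    rw [ofPresented_A, toPresented, lift_inr, powA_ofAdd_one]
  · show toPresented (ofPresented T) = T
    rw [ofPresented_T, toPresented, lift_inl, conjOrbitHom_single, conjOrbit_zero]

theorem ofPresented_comp_toPresented : ofPresented.comp toPresented = MonoidHom.id Γ := by
  refine SemidirectProduct.hom_ext (MonoidHom.ext_ofAdd_single fun i => ?_)
    (MonoidHom.ext_mzmod ?_)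
  · simp only [MonoidHom.comp_apply, MonoidHom.id_apply]
    rw [toPresented, lift_inl, conjOrbitHom_single, ofPresented_conjOrbit]
  · simp only [MonoidHom.comp_apply, MonoidHom.id_apply]
    rw [toPresented, lift_inr, ofPresented_powA]

theorem presented_iso_semidirect :
    ∃ e : PresentedGroup rels ≃*
        (Multiplicative (ZMod 4 → ℤ) ⋊[act4] Multiplicative (ZMod 4)),
      e (PresentedGroup.of 0) = SemidirectProduct.inr (Multiplicative.ofAdd 1) ∧
      e (PresentedGroup.of 1) =
        SemidirectProduct.inl (Multiplicative.ofAdd (Pi.single (0 : ZMod 4) 1)) := by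
  exact ⟨MonoidHom.toMulEquiv ofPresented toPresented toPresented_comp_ofPresented
    ofPresented_comp_toPresented, ofPresented_A, ofPresented_T⟩

end Stmt8
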